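/- arXiv:2604.11428 — 2 statements merged into one kernel-verified Lean document; each statement's English description precedes it below -/
import Mathlib

section
/- With the extremal setup below, for all sufficiently large n the eigenvector x has at most one zero coordinate. -/
open Matrix

/-- A signed graph of order `n`: a real symmetric `n × n` matrix with zero diagonal
whose off-diagonal entries lie in `{-1, 0, 1}`. -/
def IsSignedGraph {n : ℕ} (A : Matrix (Fin n) (Fin n) ℝ) : Prop :=
  A.IsSymm ∧ (∀ i, A i i = 0) ∧ ∀ i j, A i j = -1 ∨ A i j = 0 ∨ A i j = 1

/-- The index (largest eigenvalue) of a signed graph. -/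
noncomputable def lambdaMax {n : ℕ} (A : Matrix (Fin n) (Fin n) ℝ) : ℝ :=
  sSup (spectrum ℝ A)

/-- The smallest eigenvalue of a signed graph. -/
noncomputable def lambdaMin {n : ℕ} (A : Matrix (Fin n) (Fin n) ℝ) : ℝ :=
  sInf (spectrum ℝ A)

/-- The spectral radius of a signed graph. -/
noncomputable def rho {n : ℕ} (A : Matrix (Fin n) (Fin n) ℝ) : ℝ :=
  max (lambdaMax A) (-(lambdaMin A))

/-- There is a cycle, all of whose vertices lie in `s`, along whose edges
the product of the entries of `A` is negative. -/
def HasNegCycleOn {n : ℕ} (A : Matrix (Fin n) (Fin n) ℝ) (s : Set (Fin n)) : Prop :=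
  ∃ m : ℕ, 3 ≤ m ∧ ∃ c : ℕ → Fin n,
    (∀ i < m, ∀ j < m, c i = c j → i = j) ∧ (∀ i < m, c i ∈ s) ∧
    (∀ i < m, A (c i) (c ((i + 1) % m)) ≠ 0) ∧
    (∏ i ∈ Finset.range m, A (c i) (c ((i + 1) % m))) < 0

/-- A signed graph is unbalanced if it has a negative cycle. -/
def IsUnbalanced {n : ℕ} (A : Matrix (Fin n) (Fin n) ℝ) : Prop :=
  HasNegCycleOn A Set.univ

/-- An `m`-element set of pairwise adjacent vertices whose induced signed complete
subgraph is unbalanced. -/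
def IsKmMinus {n : ℕ} (A : Matrix (Fin n) (Fin n) ℝ) (m : ℕ) (s : Finset (Fin n)) : Prop :=
  s.card = m ∧ (∀ i ∈ s, ∀ j ∈ s, i ≠ j → A i j ≠ 0) ∧ HasNegCycleOn A ↑s

/-- A `K₄⁻` of a signed graph. -/
def IsK4Minus {n : ℕ} (A : Matrix (Fin n) (Fin n) ℝ) (s : Finset (Fin n)) : Prop :=
  IsKmMinus A 4 s

/-- A signed graph is `t𝒦₄⁻`-free if it contains fewer than `t` distinct `K₄⁻`'s. -/
def TK4Free {n : ℕ} (t : ℕ) (A : Matrix (Fin n) (Fin n) ℝ) : Prop :=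
  {s : Finset (Fin n) | IsK4Minus A s}.ncard < t

/-- Switching isomorphism of signed graphs: `B = (PD) A (PD)ᵀ` for a permutation
matrix `P` and a `±1` diagonal matrix `D`. -/
def SwitchIso {n : ℕ} (A B : Matrix (Fin n) (Fin n) ℝ) : Prop :=
  ∃ (σ : Equiv.Perm (Fin n)) (d : Fin n → ℝ), (∀ i, d i = 1 ∨ d i = -1) ∧
    B = (σ.permMatrix ℝ * Matrix.diagonal d) * A * (σ.permMatrix ℝ * Matrix.diagonal d)ᵀ

/-- The signed graph `Γ_{s,n}`: the vertices `0, …, n-2` are pairwise adjacent,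
the last vertex `n-1` is adjacent exactly to `0, …, s`, and every edge is positive
except the single negative edge joining `n-1` and `0`. -/
noncomputable def GammaSN (s n : ℕ) : Matrix (Fin n) (Fin n) ℝ :=
  fun i j =>
    if i = j then 0
    else if i.val ≠ n - 1 ∧ j.val ≠ n - 1 then 1
    else if min i.val j.val = 0 then -1
    else if min i.val j.val ≤ s then 1
    else 0

/-- The signed graph `Σ_{k,n}` with parameter `r`: vertex `0` is `u₁`, vertex `1` is `u₂`,
vertices `2, …, r+1` are `w₁, …, w_r`, vertices `r+2, …, r+k+1` are `q₁, …, q_k`, and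
vertices `r+k+2, …, n-1` are `v₁, …, v_{n-2-r-k}`.  The only negative edge is `u₁u₂`. -/
noncomputable def SigmaKN (r k n : ℕ) : Matrix (Fin n) (Fin n) ℝ :=
  fun i j =>
    if i = j then 0
    else if min i.val j.val = 0 then (if max i.val j.val = 1 then -1 else 1)
    else if min i.val j.val = 1 then (if max i.val j.val ≤ r + k + 1 then 1 else 0)
    else if max i.val j.val ≤ r + 1 then 1
    else if max i.val j.val ≤ r + k + 1 then 0
    else 1

/-!
The signed graph `Γ_{1,n}` (a positive `K_{n-1}` plus one vertex joined negatively to one clique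
vertex and positively to another) is unbalanced and has no `K₄⁻` at all, so it competes with the
extremal graph; its clique forces its index, hence the extremal index `λ₁`, to be at least `n - 2`.
On the other hand, evaluating `A x = λ₁ x` at a coordinate where `x` is maximal, the zero diagonal
and the entries `≤ 1` give `λ₁ ≤ n - 1 - z`, where `z` is the number of zero coordinates of `x`.
Hence `z ≤ 1`.
-/

open Finset

theorem Matrix.IsSymm.dotProduct_mulVec_le_sSup_spectrum {n : Type*} [Fintype n]
    [DecidableEq n] {B : Matrix n n ℝ} (hB : B.IsSymm) (y : n → ℝ) :
    y ⬝ᵥ (B *ᵥ y) ≤ sSup (spectrum ℝ B) * (y ⬝ᵥ y) := by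
  have hB' : B.IsHermitian := isHermitian_iff_isSymm.mpr hB
  set b := hB'.eigenvectorBasis
  have hexpand (z : n → ℝ) : y ⬝ᵥ z = ∑ i, ((b i : n → ℝ) ⬝ᵥ y) * ((b i : n → ℝ) ⬝ᵥ z) := by
    have := b.sum_inner_mul_inner (WithLp.toLp 2 y) (WithLp.toLp 2 z)
    simp only [EuclideanSpace.inner_eq_star_dotProduct, star_trivial] at this
    simp only [dotProduct_comm y z, ← this, dotProduct_comm z]
  have hcoeff (i : n) :
      (b i : n → ℝ) ⬝ᵥ (B *ᵥ y) = hB'.eigenvalues i * ((b i : n → ℝ) ⬝ᵥ y) := by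
    rw [dotProduct_mulVec, ← mulVec_transpose, hB.eq, hB'.mulVec_eigenvectorBasis,
      smul_dotProduct, smul_eq_mul]
  have hle (i : n) : hB'.eigenvalues i ≤ sSup (spectrum ℝ B) :=
    le_csSup B.finite_spectrum.bddAbove (hB'.eigenvalues_mem_spectrum_real i)
  calc y ⬝ᵥ (B *ᵥ y) = ∑ i, hB'.eigenvalues i * ((b i : n → ℝ) ⬝ᵥ y) ^ 2 := by
        rw [hexpand]; simp only [hcoeff]; congr! 1 with i; ring
    _ ≤ ∑ i, sSup (spectrum ℝ B) * ((b i : n → ℝ) ⬝ᵥ y) ^ 2 := by gcongr with i; exact hle i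
    _ = sSup (spectrum ℝ B) * (y ⬝ᵥ y) := by rw [hexpand y, mul_sum]; simp only [sq]

theorem card_sub_one_le_lambdaMax {n : ℕ} {B : Matrix (Fin n) (Fin n) ℝ} (hB : B.IsSymm)
    {S : Finset (Fin n)} (hS : S.Nonempty)
    (hclique : ∀ i ∈ S, ∀ j ∈ S, B i j = if i = j then 0 else 1) :
    (#S : ℝ) - 1 ≤ lambdaMax B := by
  set y : Fin n → ℝ := fun i => if i ∈ S then 1 else 0
  have hrow (i) (hi : i ∈ S) : (B *ᵥ y) i = #S - 1 := by
    simp only [mulVec, dotProduct, y, mul_ite, mul_one, mul_zero, sum_ite_mem, univ_inter]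
    rw [sum_congr rfl fun j hj => hclique i hi j hj, sum_ite, sum_const_zero, zero_add,
      sum_const, filter_ne, card_erase_of_mem hi, nsmul_one, Nat.cast_sub hS.card_pos,
      Nat.cast_one]
  have hquad : y ⬝ᵥ (B *ᵥ y) = #S * (#S - 1) := by
    simp only [dotProduct, y, ite_mul, one_mul, zero_mul, sum_ite_mem, univ_inter]
    rw [sum_congr rfl hrow, sum_const, nsmul_eq_mul]
  have hnorm : y ⬝ᵥ y = #S := by simp [dotProduct, y]
  have hrayleigh := hB.dotProduct_mulVec_le_sSup_spectrum y
  rw [hquad, hnorm, mul_comm] at hrayleigh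
  exact le_of_mul_le_mul_right hrayleigh (by exact_mod_cast hS.card_pos)

theorem le_card_sub_one_sub_card_zeros_of_mulVec_eq_smul {ι : Type*} [Fintype ι] [DecidableEq ι]
    {A : Matrix ι ι ℝ} (hdiag : ∀ i, A i i = 0) (hle : ∀ i j, A i j ≤ 1) {x : ι → ℝ}
    (hx_nonneg : ∀ i, 0 ≤ x i) (hx : x ≠ 0) {μ : ℝ} (hμ : A *ᵥ x = μ • x) :
    μ ≤ Fintype.card ι - 1 - #{i | x i = 0} := by
  obtain ⟨k, hk⟩ := Function.ne_iff.mp hx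
  have : Nonempty ι := ⟨k⟩
  obtain ⟨i₀, hmax⟩ := Finite.exists_max x
  have hpos : 0 < x i₀ := ((hx_nonneg k).lt_of_ne' hk).trans_le (hmax k)
  have hterm (j : ι) : A i₀ j * x j ≤
      x i₀ * (1 - (if j = i₀ then 1 else 0) - (if x j = 0 then 1 else 0)) := by
    by_cases hj : j = i₀
    · subst hj; simp [hdiag, hpos.ne']
    by_cases hxj : x j = 0
    · simp [hj, hxj]
    · simpa [hj, hxj] using
        (mul_le_of_le_one_left (hx_nonneg j) (hle i₀ j)).trans (hmax j)
  have hsum : μ * x i₀ ≤ x i₀ * (Fintype.card ι - 1 - #{i | x i = 0}) := by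
    calc μ * x i₀ = ∑ j, A i₀ j * x j := by
          rw [← smul_eq_mul, ← Pi.smul_apply, ← hμ]; rfl
      _ ≤ _ := sum_le_sum fun j _ => hterm j
      _ = _ := by
          simp only [← mul_sum, sum_sub_distrib, sum_boole]
          simp [filter_eq']
  exact le_of_mul_le_mul_left (by linarith) hpos

theorem hasNegCycleOn_of_triangle {n : ℕ} {A : Matrix (Fin n) (Fin n) ℝ} {s : Set (Fin n)}
    {a b c : Fin n} (hab : a ≠ b) (hbc : b ≠ c) (hca : c ≠ a) (ha : a ∈ s) (hb : b ∈ s)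
    (hc : c ∈ s) (hneg : A a b * A b c * A c a < 0) : HasNegCycleOn A s := by
  have hab₀ : A a b ≠ 0 := by intro h; simp [h] at hneg
  have hbc₀ : A b c ≠ 0 := by intro h; simp [h] at hneg
  have hca₀ : A c a ≠ 0 := by intro h; simp [h] at hneg
  refine ⟨3, le_rfl, fun i => if i = 0 then a else if i = 1 then b else c, ?_, ?_, ?_, ?_⟩
  · intro i hi j hj
    interval_cases i <;> interval_cases j <;> simp [hab, hbc, hca, hab.symm, hbc.symm, hca.symm]
  · intro i hi
    interval_cases i <;> simpa
  · intro i hi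
    interval_cases i <;> simpa
  · simpa [prod_range_succ] using hneg

theorem not_hasNegCycleOn_of_nonneg {n : ℕ} {A : Matrix (Fin n) (Fin n) ℝ} {s : Set (Fin n)}
    (h : ∀ i ∈ s, ∀ j ∈ s, 0 ≤ A i j) : ¬ HasNegCycleOn A s := by
  rintro ⟨m, hm, c, -, hmem, -, hprod⟩
  refine hprod.not_ge (prod_nonneg fun i hi => h _ (hmem i (mem_range.mp hi)) _ ?_)
  exact hmem _ (Nat.mod_lt _ (by omega))

theorem isSignedGraph_gammaSN (s n : ℕ) : IsSignedGraph (GammaSN s n) := by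
  refine ⟨?_, fun i => by simp [GammaSN], fun i j => by unfold GammaSN; split_ifs <;> simp⟩
  ext i j
  simp only [GammaSN, transpose_apply, min_comm j.val, eq_comm (a := j),
    and_comm (a := j.val ≠ n - 1)]

theorem gammaSN_apply_of_ne_last {s m : ℕ} {i j : Fin (m + 1)} (hi : i ≠ Fin.last m)
    (hj : j ≠ Fin.last m) : GammaSN s (m + 1) i j = if i = j then 0 else 1 := by
  rw [Ne, Fin.ext_iff, Fin.val_last] at hi hj
  simp [GammaSN, hi, hj]

theorem gammaSN_one_apply_last {m : ℕ} {j : Fin (m + 1)} (hj : 2 ≤ j.val) :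
    GammaSN 1 (m + 1) j (Fin.last m) = 0 := by
  simp only [GammaSN, Fin.ext_iff, Fin.val_last, Nat.add_sub_cancel]
  have := j.is_le
  split_ifs <;> first | rfl | omega

theorem isUnbalanced_gammaSN_one {m : ℕ} (hm : 2 ≤ m) : IsUnbalanced (GammaSN 1 (m + 1)) := by
  have hm0 : 0 ≠ m := by omega
  have hm1 : 1 ≠ m := by omega
  refine hasNegCycleOn_of_triangle (a := Fin.last m) (b := ⟨0, by omega⟩)
    (c := ⟨1, by omega⟩) ?_ ?_ ?_ trivial trivial trivial ?_
  all_goals simp [Fin.ext_iff, GammaSN, hm0, hm0.symm, hm1]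

theorem not_isK4Minus_gammaSN_one {m : ℕ} (s : Finset (Fin (m + 1))) :
    ¬ IsK4Minus (GammaSN 1 (m + 1)) s := by
  rintro ⟨hcard, hadj, hneg⟩
  -- Through the last vertex there is no `K₄`, as its only neighbours are `0` and `1`; away from
  -- it all edges are positive.
  by_cases hL : Fin.last m ∈ s
  · have hle : (s.erase (Fin.last m)).card ≤ (range 2).card := by
      refine card_le_card_of_injOn Fin.val (fun j hj => mem_range.mpr ?_) Fin.val_injective.injOn
      by_contra! h2
      exact hadj j (mem_of_mem_erase hj) _ hL (ne_of_mem_erase hj) (gammaSN_one_apply_last h2)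
    rw [card_erase_of_mem hL, hcard, card_range] at hle
    omega
  · refine not_hasNegCycleOn_of_nonneg (fun i hi j hj => ?_) hneg
    rw [gammaSN_apply_of_ne_last (ne_of_mem_of_not_mem hi hL) (ne_of_mem_of_not_mem hj hL)]
    split_ifs <;> norm_num

theorem sub_one_le_lambdaMax_gammaSN {s m : ℕ} (hm : 0 < m) :
    (m : ℝ) - 1 ≤ lambdaMax (GammaSN s (m + 1)) := by
  have hS : (univ.erase (Fin.last m)).Nonempty := ⟨0, by simp [Fin.ext_iff]; omega⟩
  simpa using card_sub_one_le_lambdaMax (isSignedGraph_gammaSN s (m + 1)).1 hS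
    fun i hi j hj => gammaSN_apply_of_ne_last (ne_of_mem_erase hi) (ne_of_mem_erase hj)

theorem extremal_eigenvector_at_most_one_zero_general (t : ℕ) :
    ∃ N : ℕ, ∀ n : ℕ, N + 4 ≤ n → t ≤ (n - 2).choose 2 →
      ∀ (A : Matrix (Fin n) (Fin n) ℝ) (x : Fin n → ℝ),
        IsSignedGraph A → IsUnbalanced A → TK4Free t A →
        (∀ B : Matrix (Fin n) (Fin n) ℝ,
          IsSignedGraph B → IsUnbalanced B → TK4Free t B → lambdaMax B ≤ lambdaMax A) →
        (∀ i, 0 ≤ x i) → (∑ i, x i ^ 2) = 1 → A.mulVec x = lambdaMax A • x →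
        {i : Fin n | x i = 0}.ncard ≤ 1 := by
  refine ⟨0, fun n hn _ A x hA _ hA_free hA_max hx_nonneg hx_norm hx_eig => ?_⟩
  obtain ⟨m, rfl⟩ : ∃ m, n = m + 1 := ⟨n - 1, by omega⟩
  have hΓ_free : TK4Free t (GammaSN 1 (m + 1)) := by
    rw [TK4Free, Set.eq_empty_of_forall_notMem (s := {s | IsK4Minus _ s})
      not_isK4Minus_gammaSN_one, Set.ncard_empty]
    exact (Nat.zero_le _).trans_lt hA_free
  have hlower : (m : ℝ) - 1 ≤ lambdaMax A :=
    (sub_one_le_lambdaMax_gammaSN (by omega)).trans <| hA_max _ (isSignedGraph_gammaSN 1 (m + 1))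
      (isUnbalanced_gammaSN_one (by omega)) hΓ_free
  have hx : x ≠ 0 := by rintro rfl; simp at hx_norm
  have hupper := le_card_sub_one_sub_card_zeros_of_mulVec_eq_smul hA.2.1
    (fun i j => by rcases hA.2.2 i j with h | h | h <;> linarith) hx_nonneg hx hx_eig
  rw [Set.ncard_eq_toFinset_card', Set.toFinset_ofPred]
  by_contra! htwo
  have htwo' : (2 : ℝ) ≤ #{i | x i = 0} := by exact_mod_cast htwo
  simp only [Fintype.card_fin, Nat.cast_add, Nat.cast_one] at hupper
  linarith

theorem extremal_eigenvector_at_most_one_zero (t r : ℕ) (ht : 2 ≤ t)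
    (hr : (r : ℝ) = (1 + Real.sqrt (8 * (t : ℝ) - 7)) / 2) :
    ∃ N : ℕ, ∀ n : ℕ, N + 4 ≤ n → t ≤ (n - 2).choose 2 →
      ∀ (A : Matrix (Fin n) (Fin n) ℝ) (x : Fin n → ℝ),
        IsSignedGraph A → IsUnbalanced A → TK4Free t A →
        (∀ B : Matrix (Fin n) (Fin n) ℝ,
          IsSignedGraph B → IsUnbalanced B → TK4Free t B → lambdaMax B ≤ lambdaMax A) →
        (∀ i, 0 ≤ x i) → (∑ i, x i ^ 2) = 1 → A.mulVec x = lambdaMax A • x →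
        {i : Fin n | x i = 0}.ncard ≤ 1 :=
  extremal_eigenvector_at_most_one_zero_general t
end

section
/- With the extremal setup below, assume further that v₁v_n is the unique negative edge of Γ′ and that x_n ≤ x₁. Then, for all sufficiently large n: every neighbor of v_n other than v₁ is also a neighbor of v₁, and every vertex of Γ′ other than v₁ and v_n is adjacent to v₁ or to v_n. -/
open Matrix

/-!
Every `K₄⁻` contains the unique negative edge `v₁vₙ`. Hence adding the edge `v₁j`, or moving an
edge `vₙj` to `v₁j`, keeps the graph `t𝒦₄⁻`-free whenever no `K₄⁻` can pass through `j`
afterwards; moving is used when `v₁` and `vₙ` have a common neighbour, whose triangle keeps the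
graph unbalanced. Either change does not lower the Rayleigh quotient at `x` (for moving, this is
where `xₙ ≤ x₁` enters), so by maximality `x` is an eigenvector of the new graph too, and the
changed rows force `x₁ = 0`. That is impossible: then `xₙ = 0`, so `x` vanishes on
`N(v₁) ∪ N(vₙ)`, and adding `v₁w` for any `w` with `x_w > 0` forces `x_w = 0`.
-/

section Spectral

variable {n : ℕ} {A B : Matrix (Fin n) (Fin n) ℝ} {x : Fin n → ℝ}

lemma posSemidef_algebraMap_lambdaMax_sub (hA : A.IsSymm) :
    (algebraMap ℝ _ (lambdaMax A) - A).PosSemidef := by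
  have hc : (algebraMap ℝ (Matrix (Fin n) (Fin n) ℝ) (lambdaMax A)).IsHermitian := by
    rw [algebraMap_eq_diagonal]; exact isHermitian_diagonal _
  refine posSemidef_iff_isHermitian_and_spectrum_nonneg.mpr
    ⟨hc.sub (isHermitian_iff_isSymm.mpr hA), ?_⟩
  rw [← spectrum.singleton_sub_eq]
  rintro _ ⟨_, rfl, μ, hμ, rfl⟩
  exact sub_nonneg.mpr (le_csSup A.finite_real_spectrum.bddAbove hμ)

lemma dotProduct_mulVec_le_lambdaMax (hA : A.IsSymm) (x : Fin n → ℝ) :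
    x ⬝ᵥ A *ᵥ x ≤ lambdaMax A * (x ⬝ᵥ x) := by
  have := (posSemidef_algebraMap_lambdaMax_sub hA).dotProduct_mulVec_nonneg x
  simpa [sub_mulVec, Algebra.algebraMap_eq_smul_one, smul_mulVec] using this

lemma mulVec_eq_lambdaMax_smul_of_dotProduct_mulVec_eq (hA : A.IsSymm)
    (hx : x ⬝ᵥ A *ᵥ x = lambdaMax A * (x ⬝ᵥ x)) : A *ᵥ x = lambdaMax A • x := by
  have := ((posSemidef_algebraMap_lambdaMax_sub hA).dotProduct_mulVec_zero_iff x).mp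
  simp only [star_trivial, Algebra.algebraMap_eq_smul_one, sub_mulVec, smul_mulVec, one_mulVec,
    dotProduct_sub, dotProduct_smul, smul_eq_mul, hx, sub_self, sub_eq_zero, forall_const] at this
  exact this.symm

/-- Equality is forced in `x ⬝ᵥ B *ᵥ x ≤ λ₁(B) ‖x‖² ≤ λ₁(A) ‖x‖² ≤ x ⬝ᵥ B *ᵥ x`, so `x` is also a
`λ₁(A)`-eigenvector of `B`. -/
lemma mulVec_sub_eq_zero_of_lambdaMax_le (hB : B.IsSymm) (hAx : A *ᵥ x = lambdaMax A • x)
    (hle : lambdaMax B ≤ lambdaMax A) (hδ : 0 ≤ x ⬝ᵥ (B - A) *ᵥ x) : (B - A) *ᵥ x = 0 := by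
  have hxx : 0 ≤ x ⬝ᵥ x := dotProduct_self_star_nonneg x
  have hle' := mul_le_mul_of_nonneg_right hle hxx
  have hxBx : x ⬝ᵥ B *ᵥ x = lambdaMax A * (x ⬝ᵥ x) + x ⬝ᵥ (B - A) *ᵥ x := by
    rw [sub_mulVec, dotProduct_sub, hAx, dotProduct_smul, smul_eq_mul]; ring
  have hBle := dotProduct_mulVec_le_lambdaMax hB x
  have hBx := mulVec_eq_lambdaMax_smul_of_dotProduct_mulVec_eq hB (x := x) (by linarith)
  rcases eq_or_ne x 0 with rfl | hx0
  · exact mulVec_zero _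
  have hlam : lambdaMax B = lambdaMax A :=
    mul_right_cancel₀ (fun h => hx0 (dotProduct_self_eq_zero.mp h)) (by linarith)
  rw [sub_mulVec, hBx, hAx, hlam, sub_self]

lemma eq_zero_of_mulVec_eq_smul {c : ℝ} (hx : A *ᵥ x = c • x) {a b : Fin n} (hxa : x a = 0)
    (hrow : ∀ k, 0 ≤ A a k * x k) (hab : A a b ≠ 0) : x b = 0 := by
  have hsum : ∑ k, A a k * x k = 0 := by
    simpa [mulVec, dotProduct, hxa] using congrFun hx a
  have := (Finset.sum_eq_zero_iff_of_nonneg fun k _ => hrow k).mp hsum b (Finset.mem_univ b)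
  exact (mul_eq_zero.mp this).resolve_left hab

end Spectral

section EdgeMatrix

variable {V : Type*} [DecidableEq V] {p q : V}

def edgeMatrix (p q : V) : Matrix V V ℝ :=
  single p q 1 + single q p 1

lemma edgeMatrix_isSymm (p q : V) : (edgeMatrix p q).IsSymm := by
  simp [edgeMatrix, IsSymm, transpose_single, add_comm]

lemma edgeMatrix_apply_eq_zero (a b : V) (h : ¬((a = p ∧ b = q) ∨ (a = q ∧ b = p))) :
    edgeMatrix p q a b = 0 := by
  simp only [edgeMatrix, Matrix.add_apply, single_apply]
  split_ifs <;> grind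

lemma edgeMatrix_nonneg (a b : V) : 0 ≤ edgeMatrix p q a b := by
  simp only [edgeMatrix, Matrix.add_apply, single_apply]
  split_ifs <;> norm_num

lemma edgeMatrix_mulVec [Fintype V] (x : V → ℝ) :
    edgeMatrix p q *ᵥ x = Pi.single p (x q) + Pi.single q (x p) := by
  ext a
  simp [edgeMatrix, add_mulVec, single_mulVec, Function.update_apply, Pi.single_apply]

lemma dotProduct_edgeMatrix_mulVec [Fintype V] (x : V → ℝ) :
    x ⬝ᵥ edgeMatrix p q *ᵥ x = 2 * (x p * x q) := by
  rw [edgeMatrix_mulVec, dotProduct_add, dotProduct_single, dotProduct_single]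
  ring

end EdgeMatrix

section SignedGraph

variable {n t : ℕ} {A B : Matrix (Fin n) (Fin n) ℝ} {s : Finset (Fin n)} {p q u v j : Fin n}

def OnlyNegEdge (A : Matrix (Fin n) (Fin n) ℝ) (u v : Fin n) : Prop :=
  ∀ a b, A a b < 0 → (a = u ∧ b = v) ∨ (a = v ∧ b = u)

lemma OnlyNegEdge.apply_nonneg (h : OnlyNegEdge A u v) {a : Fin n} (hu : a ≠ u) (hv : a ≠ v)
    (b : Fin n) : 0 ≤ A a b :=
  not_lt.mp fun hab => by rcases h a b hab with ⟨rfl, -⟩ | ⟨rfl, -⟩ <;> contradiction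

lemma OnlyNegEdge.mul_nonneg_of_eq_zero (h : OnlyNegEdge A u v) {x : Fin n → ℝ} (hx : ∀ i, 0 ≤ x i)
    (hu : x u = 0) (hv : x v = 0) (a k : Fin n) : 0 ≤ A a k * x k := by
  rcases le_or_gt 0 (A a k) with hak | hak
  · exact mul_nonneg hak (hx k)
  · rcases h a k hak with ⟨-, rfl⟩ | ⟨-, rfl⟩ <;> simp [*]

lemma IsSignedGraph.apply_eq_one (hA : IsSignedGraph A) {a b : Fin n} (h0 : 0 ≤ A a b)
    (hab : A a b ≠ 0) : A a b = 1 := by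
  rcases hA.2.2 a b with h' | h' | h'
  · linarith
  · exact absurd h' hab
  · exact h'

lemma IsSignedGraph.add_edgeMatrix (hA : IsSignedGraph A) (hpq : p ≠ q) (h : A p q = 0) :
    IsSignedGraph (A + edgeMatrix p q) := by
  obtain ⟨hsym, hdiag, hval⟩ := hA
  refine ⟨hsym.add (edgeMatrix_isSymm p q), fun a => ?_, fun a b => ?_⟩
  · rw [Matrix.add_apply, hdiag, edgeMatrix_apply_eq_zero a a (by grind), add_zero]
  have hqp : A q p = 0 := by rw [hsym.apply]; exact h
  by_cases hab : (a = p ∧ b = q) ∨ (a = q ∧ b = p)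
  · rcases hab with ⟨rfl, rfl⟩ | ⟨rfl, rfl⟩ <;> simp [edgeMatrix, hpq, hpq.symm, h, hqp]
  · rw [Matrix.add_apply, edgeMatrix_apply_eq_zero a b hab, add_zero]
    exact hval a b

lemma IsSignedGraph.sub_edgeMatrix (hA : IsSignedGraph A) (hpq : p ≠ q) (h : A p q = 1) :
    IsSignedGraph (A - edgeMatrix p q) := by
  obtain ⟨hsym, hdiag, hval⟩ := hA
  refine ⟨hsym.sub (edgeMatrix_isSymm p q), fun a => ?_, fun a b => ?_⟩
  · rw [Matrix.sub_apply, hdiag, edgeMatrix_apply_eq_zero a a (by grind), sub_zero]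
  have hqp : A q p = 1 := by rw [hsym.apply]; exact h
  by_cases hab : (a = p ∧ b = q) ∨ (a = q ∧ b = p)
  · rcases hab with ⟨rfl, rfl⟩ | ⟨rfl, rfl⟩ <;> simp [edgeMatrix, hpq, hpq.symm, h, hqp]
  · rw [Matrix.sub_apply, edgeMatrix_apply_eq_zero a b hab, sub_zero]
    exact hval a b

lemma neg_of_add_edgeMatrix_neg {a b : Fin n} (h : (A + edgeMatrix p q) a b < 0) : A a b < 0 := by
  rw [Matrix.add_apply] at h
  linarith [edgeMatrix_nonneg (p := p) (q := q) a b]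

lemma neg_of_sub_edgeMatrix_neg (hA : A.IsSymm) (hpq : p ≠ q) (hA1 : A p q = 1) {a b : Fin n}
    (h : (A - edgeMatrix p q) a b < 0) : A a b < 0 := by
  have hqp : A q p = 1 := by rw [hA.apply]; exact hA1
  by_cases hab : (a = p ∧ b = q) ∨ (a = q ∧ b = p)
  · rcases hab with ⟨rfl, rfl⟩ | ⟨rfl, rfl⟩ <;> simp [edgeMatrix, hpq, hpq.symm, hA1, hqp] at h
  · rwa [Matrix.sub_apply, edgeMatrix_apply_eq_zero a b hab, sub_zero] at h

lemma HasNegCycleOn.of_agree {S : Set (Fin n)} (hA : HasNegCycleOn A S)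
    (h : ∀ a ∈ S, ∀ b ∈ S, A a b ≠ 0 → B a b = A a b) : HasNegCycleOn B S := by
  obtain ⟨m, hm, c, hinj, hmem, hnz, hprod⟩ := hA
  have hc : ∀ i < m, B (c i) (c ((i + 1) % m)) = A (c i) (c ((i + 1) % m)) := fun i hi =>
    h _ (hmem i hi) _ (hmem _ (Nat.mod_lt _ (by omega))) (hnz i hi)
  refine ⟨m, hm, c, hinj, hmem, fun i hi => hc i hi ▸ hnz i hi, ?_⟩
  rwa [Finset.prod_congr rfl fun i hi => hc i (Finset.mem_range.mp hi)]

lemma HasNegCycleOn.exists_neg {S : Set (Fin n)} (h : HasNegCycleOn A S) :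
    ∃ a ∈ S, ∃ b ∈ S, A a b < 0 := by
  obtain ⟨m, hm, c, -, hmem, -, hprod⟩ := h
  by_contra! hpos
  exact hprod.not_ge <| Finset.prod_nonneg fun i hi =>
    hpos _ (hmem i (Finset.mem_range.mp hi)) _ (hmem _ (Nat.mod_lt _ (by omega)))

lemma IsUnbalanced.add_edgeMatrix (hA : IsUnbalanced A) (hsym : A.IsSymm) (h : A p q = 0) :
    IsUnbalanced (A + edgeMatrix p q) := by
  refine HasNegCycleOn.of_agree hA fun a _ b _ hab => ?_
  rw [Matrix.add_apply, edgeMatrix_apply_eq_zero a b, add_zero]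
  rintro (⟨rfl, rfl⟩ | ⟨rfl, rfl⟩)
  · exact hab h
  · exact hab (by rw [hsym.apply]; exact h)

lemma isUnbalanced_of_triangle {a b c : Fin n} (hab : a ≠ b) (hbc : b ≠ c) (hca : c ≠ a)
    (h : A a b * A b c * A c a < 0) : IsUnbalanced A := by
  have hne : A a b ≠ 0 ∧ A b c ≠ 0 ∧ A c a ≠ 0 := by
    refine ⟨?_, ?_, ?_⟩ <;> intro h0 <;> simp [h0] at h
  refine ⟨3, le_rfl, fun i => if i = 0 then a else if i = 1 then b else c, ?_, ?_, ?_, ?_⟩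
  · intro i hi k hk hik
    interval_cases i <;> interval_cases k <;> simp_all
  · exact fun _ _ => Set.mem_univ _
  · intro i hi
    interval_cases i <;> simp [hne.1, hne.2.1, hne.2.2]
  · simpa [Finset.prod_range_succ] using h

lemma IsK4Minus.of_agree (hs : IsK4Minus B s) (h : ∀ a ∈ s, ∀ b ∈ s, B a b = A a b) :
    IsK4Minus A s :=
  ⟨hs.1, fun a ha b hb hab => h a ha b hb ▸ hs.2.1 a ha b hb hab,
    hs.2.2.of_agree fun a ha b hb _ => (h a ha b hb).symm⟩

lemma IsK4Minus.mem_of_neg (hs : IsK4Minus A s)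
    (hneg : OnlyNegEdge A u v) : u ∈ s ∧ v ∈ s := by
  obtain ⟨a, ha, b, hb, hab⟩ := hs.2.2.exists_neg
  rcases hneg a b hab with ⟨rfl, rfl⟩ | ⟨rfl, rfl⟩
  · exact ⟨ha, hb⟩
  · exact ⟨hb, ha⟩

lemma IsK4Minus.notMem_of_apply_eq_zero (hs : IsK4Minus A s)
    (hneg : OnlyNegEdge A u v) (hjv : j ≠ v)
    (hvj : A v j = 0) : j ∉ s :=
  fun hj => hs.2.1 v (hs.mem_of_neg hneg).2 j hj hjv.symm hvj

lemma IsK4Minus.notMem_of_no_common_neighbor (hs : IsK4Minus A s)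
    (hneg : OnlyNegEdge A u v)
    (hcommon : ∀ w ≠ j, A u w ≠ 0 → A v w = 0) : j ∉ s := by
  intro hj
  obtain ⟨hu, hv⟩ := hs.mem_of_neg hneg
  have hcard : ({u, v, j} : Finset (Fin n)).card < s.card := by
    rw [hs.1]
    exact (Finset.card_le_three).trans_lt (by norm_num)
  obtain ⟨w, hw, hw'⟩ := Finset.exists_mem_notMem_of_card_lt_card hcard
  simp only [Finset.mem_insert, Finset.mem_singleton, not_or] at hw'
  exact hs.2.1 v hv w hw (Ne.symm hw'.2.1)
    (hcommon w hw'.2.2 (hs.2.1 u hu w hw (Ne.symm hw'.1)))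

lemma TK4Free.of_agree_off (hA : TK4Free t A) (hagree : ∀ a b, a ≠ j → b ≠ j → B a b = A a b)
    (havoid : ∀ s, IsK4Minus B s → j ∉ s) : TK4Free t B := by
  refine lt_of_le_of_lt (Set.ncard_le_ncard (fun s hs => ?_) (Set.toFinite _)) hA
  have hj := havoid s hs
  exact IsK4Minus.of_agree hs fun a ha b hb => hagree a b (ne_of_mem_of_not_mem ha hj)
    (ne_of_mem_of_not_mem hb hj)

end SignedGraph

structure IsExtremal {n : ℕ} (t : ℕ) (A : Matrix (Fin n) (Fin n) ℝ) (x : Fin n → ℝ)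
    (u v : Fin n) : Prop where
  signed : IsSignedGraph A
  unbalanced : IsUnbalanced A
  free : TK4Free t A
  maximal : ∀ B : Matrix (Fin n) (Fin n) ℝ,
    IsSignedGraph B → IsUnbalanced B → TK4Free t B → lambdaMax B ≤ lambdaMax A
  nonneg : ∀ i, 0 ≤ x i
  ne_zero : x ≠ 0
  eigen : A *ᵥ x = lambdaMax A • x
  neg_edge : A u v < 0
  neg_unique : OnlyNegEdge A u v

namespace IsExtremal

variable {n t : ℕ} {A B : Matrix (Fin n) (Fin n) ℝ} {x : Fin n → ℝ} {u v j w : Fin n}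

lemma ne (h : IsExtremal t A x u v) : u ≠ v := by
  rintro rfl
  exact h.neg_edge.ne (h.signed.2.1 u)

lemma mulVec_sub_eq_zero (h : IsExtremal t A x u v)
    (hB : IsSignedGraph B ∧ IsUnbalanced B ∧ TK4Free t B) (hδ : 0 ≤ x ⬝ᵥ (B - A) *ᵥ x) :
    (B - A) *ᵥ x = 0 :=
  mulVec_sub_eq_zero_of_lambdaMax_le hB.1.1 h.eigen (h.maximal B hB.1 hB.2.1 hB.2.2) hδ

lemma add_edge_admissible (h : IsExtremal t A x u v) (hju : j ≠ u) (hjv : j ≠ v)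
    (huj : A u j = 0) (hvj : A v j = 0 ∨ ∀ w, A u w ≠ 0 → A v w = 0) :
    IsSignedGraph (A + edgeMatrix u j) ∧ IsUnbalanced (A + edgeMatrix u j) ∧
      TK4Free t (A + edgeMatrix u j) := by
  have huv := h.ne
  have hagree : ∀ a b, a ≠ j → b ≠ j → (A + edgeMatrix u j) a b = A a b := fun a b ha hb => by
    rw [Matrix.add_apply, edgeMatrix_apply_eq_zero a b (by grind), add_zero]
  have hneg : OnlyNegEdge (A + edgeMatrix u j) u v :=
    fun a b hab => h.neg_unique a b (neg_of_add_edgeMatrix_neg hab)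
  refine ⟨h.signed.add_edgeMatrix hju.symm huj, h.unbalanced.add_edgeMatrix h.signed.1 huj,
    h.free.of_agree_off hagree fun s hs => ?_⟩
  rcases hvj with hvj | hcommon
  · refine hs.notMem_of_apply_eq_zero hneg hjv ?_
    rw [Matrix.add_apply, edgeMatrix_apply_eq_zero v j (by grind), hvj, add_zero]
  · refine hs.notMem_of_no_common_neighbor hneg fun w hw => ?_
    rw [hagree u w hju.symm hw, hagree v w hjv.symm hw]
    exact hcommon w

lemma eq_zero_of_add_edge (h : IsExtremal t A x u v) (hju : j ≠ u) (hjv : j ≠ v)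
    (huj : A u j = 0) (hvj : A v j = 0 ∨ ∀ w, A u w ≠ 0 → A v w = 0) : x u = 0 ∧ x j = 0 := by
  have hBx := h.mulVec_sub_eq_zero (h.add_edge_admissible hju hjv huj hvj) (by
    rw [add_sub_cancel_left, dotProduct_edgeMatrix_mulVec]
    exact mul_nonneg zero_le_two (mul_nonneg (h.nonneg u) (h.nonneg j)))
  rw [add_sub_cancel_left, edgeMatrix_mulVec] at hBx
  exact ⟨by simpa [hju] using congrFun hBx j, by simpa [hju] using congrFun hBx u⟩

/-- The common neighbour `w` keeps the triangle `uvw` negative after the edge `vj` is moved. -/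
lemma move_edge_admissible (h : IsExtremal t A x u v) (hju : j ≠ u) (hjv : j ≠ v)
    (huj : A u j = 0) (hvj : A v j ≠ 0) (huw : A u w ≠ 0) (hvw : A v w ≠ 0) :
    IsSignedGraph (A + edgeMatrix u j - edgeMatrix v j) ∧
      IsUnbalanced (A + edgeMatrix u j - edgeMatrix v j) ∧
      TK4Free t (A + edgeMatrix u j - edgeMatrix v j) := by
  have huv := h.ne
  have hwu : w ≠ u := by rintro rfl; exact huw (h.signed.2.1 w)
  have hwv : w ≠ v := by rintro rfl; exact hvw (h.signed.2.1 w)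
  have hwj : w ≠ j := by rintro rfl; exact huw huj
  have hA' : IsSignedGraph (A + edgeMatrix u j) := h.signed.add_edgeMatrix hju.symm huj
  have hA'vj : (A + edgeMatrix u j) v j = 1 := by
    rw [Matrix.add_apply, edgeMatrix_apply_eq_zero v j (by grind), add_zero, h.signed.1.apply]
    exact h.signed.apply_eq_one (h.neg_unique.apply_nonneg hju hjv v) (by rwa [h.signed.1.apply])
  have hagree : ∀ a b, a ≠ j → b ≠ j → (A + edgeMatrix u j - edgeMatrix v j) a b = A a b :=
    fun a b ha hb => by
      rw [Matrix.sub_apply, Matrix.add_apply, edgeMatrix_apply_eq_zero a b (by grind),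
        edgeMatrix_apply_eq_zero a b (by grind), add_zero, sub_zero]
  have hneg : OnlyNegEdge (A + edgeMatrix u j - edgeMatrix v j) u v := fun a b hab =>
    h.neg_unique a b <| neg_of_add_edgeMatrix_neg <|
      neg_of_sub_edgeMatrix_neg hA'.1 hjv.symm hA'vj hab
  refine ⟨hA'.sub_edgeMatrix hjv.symm hA'vj, isUnbalanced_of_triangle huv hwv.symm hwu ?_,
    h.free.of_agree_off hagree fun s hs => hs.notMem_of_apply_eq_zero hneg hjv ?_⟩
  · have hwv1 : A w v = 1 :=
      h.signed.apply_eq_one (h.neg_unique.apply_nonneg hwu hwv v) (by rwa [h.signed.1.apply])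
    have hwu1 : A w u = 1 :=
      h.signed.apply_eq_one (h.neg_unique.apply_nonneg hwu hwv u) (by rwa [h.signed.1.apply])
    rw [hagree u v hju.symm hjv.symm, hagree v w hjv.symm hwj, hagree w u hwj hju.symm,
      h.signed.1.apply w v, hwv1, hwu1]
    linarith [h.neg_edge]
  · rw [Matrix.sub_apply, hA'vj]
    simp [edgeMatrix, hjv.symm]

lemma eq_zero_of_move_edge (h : IsExtremal t A x u v) (hju : j ≠ u) (hjv : j ≠ v)
    (huj : A u j = 0) (hvj : A v j ≠ 0) (huw : A u w ≠ 0) (hvw : A v w ≠ 0) (hle : x v ≤ x u) :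
    x u = 0 := by
  have huv := h.ne
  have hBA : A + edgeMatrix u j - edgeMatrix v j - A = edgeMatrix u j - edgeMatrix v j := by abel
  have hBx := h.mulVec_sub_eq_zero (h.move_edge_admissible hju hjv huj hvj huw hvw) (by
    rw [hBA, sub_mulVec, dotProduct_sub, dotProduct_edgeMatrix_mulVec,
      dotProduct_edgeMatrix_mulVec]
    nlinarith [mul_nonneg (h.nonneg j) (sub_nonneg.mpr hle)])
  rw [hBA, sub_mulVec, edgeMatrix_mulVec, edgeMatrix_mulVec, sub_eq_zero] at hBx
  have hxj : x j = 0 := by simpa [huv, hju.symm] using congrFun hBx u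
  have hxuv : x u = x v := by simpa [huv, hju.symm, hjv] using congrFun hBx j
  have hjv0 : A j v ≠ 0 := by rwa [h.signed.1.apply]
  rw [hxuv]
  exact eq_zero_of_mulVec_eq_smul h.eigen hxj
    (fun k => mul_nonneg (h.neg_unique.apply_nonneg hju hjv k) (h.nonneg k)) hjv0

lemma pos_of_le (h : IsExtremal t A x u v) (hle : x v ≤ x u) : 0 < x u := by
  refine (h.nonneg u).lt_of_ne' fun hu => ?_
  have hv : x v = 0 := le_antisymm (hu ▸ hle) (h.nonneg v)
  obtain ⟨w, hw⟩ := Function.ne_iff.mp h.ne_zero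
  have hrow := h.neg_unique.mul_nonneg_of_eq_zero h.nonneg hu hv
  have huw : A u w = 0 :=
    by_contra fun huw => hw (eq_zero_of_mulVec_eq_smul h.eigen hu (hrow u) huw)
  have hvw : A v w = 0 :=
    by_contra fun hvw => hw (eq_zero_of_mulVec_eq_smul h.eigen hv (hrow v) hvw)
  have hwu : w ≠ u := by rintro rfl; exact hw hu
  have hwv : w ≠ v := by rintro rfl; exact hw hv
  exact hw (h.eq_zero_of_add_edge hwu hwv huw (Or.inl hvw)).2

end IsExtremal

theorem extremal_neighborhood_domination (t : ℕ) :
    ∃ N : ℕ, ∀ n : ℕ, ∀ _hn : N + 4 ≤ n, t ≤ (n - 2).choose 2 →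
      ∀ (A : Matrix (Fin n) (Fin n) ℝ) (x : Fin n → ℝ),
        IsSignedGraph A → IsUnbalanced A → TK4Free t A →
        (∀ B : Matrix (Fin n) (Fin n) ℝ,
          IsSignedGraph B → IsUnbalanced B → TK4Free t B → lambdaMax B ≤ lambdaMax A) →
        (∀ i, 0 ≤ x i) → (∑ i, x i ^ 2) = 1 → A.mulVec x = lambdaMax A • x →
        let v1 : Fin n := ⟨0, by omega⟩
        let v2 : Fin n := ⟨1, by omega⟩
        let vn : Fin n := ⟨n - 1, by omega⟩
        A v1 vn < 0 →
        (∀ i j : Fin n, A i j < 0 → (i = v1 ∧ j = vn) ∨ (i = vn ∧ j = v1)) →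
        x vn ≤ x v1 →
        (∀ j : Fin n, A vn j ≠ 0 → j ≠ v1 → A v1 j ≠ 0) ∧
          (∀ j : Fin n, j ≠ v1 → j ≠ vn → (A v1 j ≠ 0 ∨ A vn j ≠ 0)) := by
  refine ⟨0, fun n _ _ A x hA hunb hfree hmax hx hnorm heig => ?_⟩
  intro v1 _ vn hneg huniq hle
  have h : IsExtremal t A x v1 vn :=
    ⟨hA, hunb, hfree, hmax, hx, fun h0 => by simp [h0] at hnorm, heig, hneg, huniq⟩
  have hpos := h.pos_of_le hle
  refine ⟨fun j hvj hj1 => ?_, fun j hj1 hjn => ?_⟩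
  · intro h1j
    have hjn : j ≠ vn := by rintro rfl; exact hvj (hA.2.1 _)
    by_cases hcommon : ∃ w, A v1 w ≠ 0 ∧ A vn w ≠ 0
    · obtain ⟨w, hw, hw'⟩ := hcommon
      exact hpos.ne' (h.eq_zero_of_move_edge hj1 hjn h1j hvj hw hw' hle)
    · push Not at hcommon
      exact hpos.ne' (h.eq_zero_of_add_edge hj1 hjn h1j (Or.inr hcommon)).1
  · by_contra! h0
    exact hpos.ne' (h.eq_zero_of_add_edge hj1 hjn h0.1 (Or.inl h0.2)).1
end
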